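/- arXiv:2105.10971 — 2 statements merged into one kernel-verified Lean document; each statement's English description precedes it below -/
import Mathlib

section
/- There exists a subset G of the vertex set of the infinite shift graph Sh_ℕ^2 such that G ∩ {(i,j) : 1 ≤ i < j ≤ n} is nonempty for all sufficiently large n and such that for every independent set I of Sh_ℕ^2 contained in G, liminf_{n→∞} |I ∩ {(i,j) : 1 ≤ i < j ≤ n}| / |G ∩ {(i,j) : 1 ≤ i < j ≤ n}| = 0. -/
/-- Two vertices `(i,j)` and `(i',j')` of the shift graph are adjacent
if `j = i'` or `j' = i` (and they are distinct). -/
abbrev shAdj (p q : ℕ × ℕ) : Prop := p ≠ q ∧ (p.2 = q.1 ∨ q.2 = p.1)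

/-- The vertex set of the shift graph `Sh_n^2`: all pairs `(i,j)` with `1 ≤ i < j ≤ n`. -/
def shiftVerts (n : ℕ) : Finset (ℕ × ℕ) :=
  (Finset.Icc 1 n ×ˢ Finset.Icc 1 n).filter fun p => p.1 < p.2

open Classical in
/-- The independence number of the subgraph of the shift graph induced on `G`. -/
noncomputable def indepNum2 (G : Finset (ℕ × ℕ)) : ℕ :=
  (G.powerset.filter fun I => ∀ p ∈ I, ∀ q ∈ I, ¬ shAdj p q).sup Finset.card

/-- `α_n^2`: the minimum of `α(Sh_n^2[G])/|G|` over nonempty `G ⊆ V(Sh_n^2)`. -/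
noncomputable def alpha2 (n : ℕ) : ℝ :=
  sInf {r : ℝ | ∃ G : Finset (ℕ × ℕ), G.Nonempty ∧ G ⊆ shiftVerts n ∧
    r = (indepNum2 G : ℝ) / G.card}

open Classical in
/-- The number of elements of `I` among the pairs `(i,j)` with `1 ≤ i < j ≤ n`. -/
noncomputable def countIn (I : Set (ℕ × ℕ)) (n : ℕ) : ℕ :=
  ((shiftVerts n).filter fun p => p ∈ I).card

/- ## Auxiliary construction -/

/-- State: (current time, upper bound on mass so far). -/
def StX : ℕ → ℕ × ℕ
  | 0 => (1, 1)
  | r + 1 =>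
    let T := (StX r).1
    let g := (StX r).2
    let c := T + (r + 1) * g + 1
    let L := (r + 1) * (g + c) + 1
    (c + L, g + c + L)

def TX (r : ℕ) : ℕ := (StX r).1
def gX (r : ℕ) : ℕ := (StX r).2
def cX (r : ℕ) : ℕ := TX r + (r + 1) * gX r + 1
def LX (r : ℕ) : ℕ := (r + 1) * (gX r + cX r) + 1

lemma TX_succ (r : ℕ) : TX (r + 1) = cX r + LX r := rfl
lemma gX_succ (r : ℕ) : gX (r + 1) = gX r + cX r + LX r := rfl

lemma gX_pos (r : ℕ) : 1 ≤ gX r := by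
  induction r with
  | zero => exact le_refl 1
  | succ n ih => rw [gX_succ]; omega

lemma TX_lt_cX (r : ℕ) : TX r < cX r := by
  have := gX_pos r; unfold cX; nlinarith

lemma cX_lt_TX_succ (r : ℕ) : cX r < TX (r + 1) := by
  rw [TX_succ]; unfold LX; omega

lemma TX_mono : Monotone TX := by
  apply monotone_nat_of_le_succ
  intro n
  exact le_of_lt ((TX_lt_cX n).trans (cX_lt_TX_succ n))

lemma gX_mono : Monotone gX := by
  apply monotone_nat_of_le_succ
  intro n; rw [gX_succ]; omega

lemma cX_mono : Monotone cX := by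
  intro a b hab
  unfold cX
  have h1 := TX_mono hab
  have h2 := gX_mono hab
  have h3 : (a + 1) * gX a ≤ (b + 1) * gX b :=
    Nat.mul_le_mul (by omega) h2
  omega

lemma cX_lt_of_lt {r s : ℕ} (h : r < s) : cX r < cX s := by
  calc cX r < TX (r + 1) := cX_lt_TX_succ r
    _ ≤ TX s := TX_mono h
    _ < cX s := TX_lt_cX s

lemma le_TX (r : ℕ) : r ≤ TX r := by
  induction r with
  | zero => exact Nat.zero_le _
  | succ n ih =>
    have h1 := TX_lt_cX n
    have h2 := cX_lt_TX_succ n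
    omega

lemma one_le_TX (r : ℕ) : 1 ≤ TX r := by
  induction r with
  | zero => exact le_refl 1
  | succ n ih => have := cX_lt_TX_succ n; have := TX_lt_cX n; omega

def fanF (r : ℕ) : Finset (ℕ × ℕ) :=
  (Finset.Ico 1 (cX r)).image fun x => (x, cX r)

def starF (r : ℕ) : Finset (ℕ × ℕ) :=
  (Finset.Ioc (cX r) (TX (r + 1))).image fun y => (cX r, y)

lemma mem_fanF {p : ℕ × ℕ} {r : ℕ} :
    p ∈ fanF r ↔ 1 ≤ p.1 ∧ p.1 < cX r ∧ p.2 = cX r := by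
  unfold fanF
  simp only [Finset.mem_image, Finset.mem_Ico]
  constructor
  · rintro ⟨x, ⟨h1, h2⟩, rfl⟩; exact ⟨h1, h2, rfl⟩
  · rintro ⟨h1, h2, h3⟩; exact ⟨p.1, ⟨h1, h2⟩, by rw [← h3]⟩

lemma mem_starF {p : ℕ × ℕ} {r : ℕ} :
    p ∈ starF r ↔ p.1 = cX r ∧ cX r < p.2 ∧ p.2 ≤ TX (r + 1) := by
  unfold starF
  simp only [Finset.mem_image, Finset.mem_Ioc]
  constructor
  · rintro ⟨y, ⟨h1, h2⟩, rfl⟩; exact ⟨rfl, h1, h2⟩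
  · rintro ⟨h1, h2, h3⟩; exact ⟨p.2, ⟨h2, h3⟩, by rw [← h1]⟩

lemma card_fanF (r : ℕ) : (fanF r).card = cX r - 1 := by
  unfold fanF
  rw [Finset.card_image_of_injective _ (fun a b h => (Prod.mk.injEq _ _ _ _).mp h |>.1)]
  simp [Nat.card_Ico]

lemma card_starF (r : ℕ) : (starF r).card = LX r := by
  unfold starF
  rw [Finset.card_image_of_injective _ (fun a b h => (Prod.mk.injEq _ _ _ _).mp h |>.2)]
  rw [Nat.card_Ioc, TX_succ]
  omega

/-- The counterexample set. -/
def GG : Set (ℕ × ℕ) := {p | ∃ r, p ∈ fanF r ∨ p ∈ starF r}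

lemma gX_eq_sum (r : ℕ) : gX r = 1 + ∑ s ∈ Finset.range r, (cX s + LX s) := by
  induction r with
  | zero => simp [gX, StX]
  | succ n ih =>
    rw [gX_succ, Finset.sum_range_succ, ih]; ring

def coverF (r : ℕ) : Finset (ℕ × ℕ) :=
  (Finset.range r).biUnion fun s => fanF s ∪ starF s

lemma card_coverF (r : ℕ) : (coverF r).card + 1 ≤ gX r := by
  have hsum : (coverF r).card ≤ ∑ s ∈ Finset.range r, (cX s + LX s) := by
    unfold coverF
    refine le_trans Finset.card_biUnion_le (Finset.sum_le_sum fun s _ => ?_)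
    have h1 := Finset.card_union_le (fanF s) (starF s)
    have h2 := card_fanF s
    have h3 := card_starF s
    omega
  rw [gX_eq_sum]
  omega

/-- Cover lemma at cutoff `TX r`. -/
lemma cover_TX {p : ℕ × ℕ} {r : ℕ} (hp : p ∈ GG) (h2 : p.2 ≤ TX r) :
    p ∈ coverF r := by
  obtain ⟨s, hs⟩ := hp
  have hsr : s < r := by
    by_contra h
    push_neg at h
    have hcs : cX r ≤ cX s := cX_mono h
    have hTr : TX r < cX r := TX_lt_cX r
    rcases hs with h' | h'
    · rw [mem_fanF] at h'; omega
    · rw [mem_starF] at h'; omega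
  unfold coverF
  rw [Finset.mem_biUnion]
  exact ⟨s, Finset.mem_range.mpr hsr, Finset.mem_union.mpr hs⟩

/-- Cover lemma at cutoff `cX r`. -/
lemma cover_cX {p : ℕ × ℕ} {r : ℕ} (hp : p ∈ GG) (h2 : p.2 ≤ cX r) :
    p ∈ coverF r ∪ fanF r := by
  obtain ⟨s, hs⟩ := hp
  rcases lt_trichotomy s r with hsr | rfl | hsr
  · exact Finset.mem_union_left _ (by
      unfold coverF
      rw [Finset.mem_biUnion]
      exact ⟨s, Finset.mem_range.mpr hsr, Finset.mem_union.mpr hs⟩)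
  · rcases hs with h' | h'
    · exact Finset.mem_union_right _ h'
    · rw [mem_starF] at h'; omega
  · exfalso
    have hcs : cX r < cX s := cX_lt_of_lt hsr
    rcases hs with h' | h'
    · rw [mem_fanF] at h'; omega
    · rw [mem_starF] at h'; omega

lemma mem_shiftVerts {p : ℕ × ℕ} {n : ℕ} :
    p ∈ shiftVerts n ↔ 1 ≤ p.1 ∧ p.1 ≤ n ∧ 1 ≤ p.2 ∧ p.2 ≤ n ∧ p.1 < p.2 := by
  unfold shiftVerts
  simp only [Finset.mem_filter, Finset.mem_product, Finset.mem_Icc]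
  tauto

lemma countIn_GG_le_TX (r : ℕ) : countIn GG (TX r) + 1 ≤ gX r := by
  classical
  rw [countIn]
  have hsub : ((shiftVerts (TX r)).filter fun p => p ∈ GG) ⊆ coverF r := by
    intro p hp
    rw [Finset.mem_filter] at hp
    exact cover_TX hp.2 (mem_shiftVerts.mp hp.1).2.2.2.1
  have := Finset.card_le_card hsub
  have := card_coverF r
  omega

lemma countIn_GG_le_cX (r : ℕ) : countIn GG (cX r) ≤ gX r + cX r := by
  classical
  rw [countIn]
  have hsub : ((shiftVerts (cX r)).filter fun p => p ∈ GG) ⊆ coverF r ∪ fanF r := by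
    intro p hp
    rw [Finset.mem_filter] at hp
    exact cover_cX hp.2 (mem_shiftVerts.mp hp.1).2.2.2.1
  have h1 := Finset.card_le_card hsub
  have h2 := (Finset.card_union_le (coverF r) (fanF r))
  have h3 := card_coverF r
  have h4 := card_fanF r
  omega

lemma countIn_GG_ge_cX (r : ℕ) : (r + 1) * gX r ≤ countIn GG (cX r) := by
  classical
  rw [countIn]
  have hsub : fanF r ⊆ (shiftVerts (cX r)).filter fun p => p ∈ GG := by
    intro p hp
    rw [Finset.mem_filter]
    rw [mem_fanF] at hp
    refine ⟨mem_shiftVerts.mpr ⟨hp.1, by omega, by omega, by omega, by omega⟩,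
      ⟨r, Or.inl (mem_fanF.mpr hp)⟩⟩
  have h1 := Finset.card_le_card hsub
  rw [card_fanF] at h1
  have : (r + 1) * gX r ≤ cX r - 1 := by
    unfold cX; have := one_le_TX r; omega
  omega

lemma countIn_GG_ge_TX_succ (r : ℕ) :
    (r + 1) * (gX r + cX r) ≤ countIn GG (TX (r + 1)) := by
  classical
  rw [countIn]
  have hone : 1 ≤ cX r := by have := TX_lt_cX r; have := one_le_TX r; omega
  have hsub : starF r ⊆ (shiftVerts (TX (r + 1))).filter fun p => p ∈ GG := by
    intro p hp
    rw [Finset.mem_filter]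
    rw [mem_starF] at hp
    have h5 := cX_lt_TX_succ r
    refine ⟨mem_shiftVerts.mpr ⟨by omega, by omega, by omega, by omega, by omega⟩,
      ⟨r, Or.inr (mem_starF.mpr hp)⟩⟩
  have h1 := Finset.card_le_card hsub
  rw [card_starF] at h1
  have : (r + 1) * (gX r + cX r) ≤ LX r := by unfold LX; omega
  omega

section Indep

variable {I : Set (ℕ × ℕ)} (hIG : I ⊆ GG)
  (hind : ∀ p ∈ I, ∀ q ∈ I, ¬ shAdj p q)

include hIG hind in
lemma countIn_I_fan {r z : ℕ} (hz : (cX r, z) ∈ I) :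
    countIn I (cX r) + 1 ≤ gX r := by
  classical
  rw [countIn]
  have hsub : ((shiftVerts (cX r)).filter fun p => p ∈ I) ⊆ coverF r := by
    intro p hp
    rw [Finset.mem_filter] at hp
    have hpI := hp.2
    have hc := cover_cX (hIG hpI) (mem_shiftVerts.mp hp.1).2.2.2.1
    rcases Finset.mem_union.mp hc with h | h
    · exact h
    · exfalso
      rw [mem_fanF] at h
      exact hind p hpI (cX r, z) hz
        ⟨by intro he; rw [he] at h; simp at h, Or.inl h.2.2⟩
  have := Finset.card_le_card hsub
  have := card_coverF r
  omega

include hIG hind in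
lemma countIn_I_star {r : ℕ} (hz : ∀ z, (cX r, z) ∉ I) :
    countIn I (TX (r + 1)) ≤ gX r + cX r := by
  classical
  rw [countIn]
  have hsub : ((shiftVerts (TX (r + 1))).filter fun p => p ∈ I) ⊆ coverF r ∪ fanF r := by
    intro p hp
    rw [Finset.mem_filter] at hp
    have hpI := hp.2
    obtain ⟨s, hs⟩ := hIG hpI
    have h2 : p.2 ≤ TX (r + 1) := (mem_shiftVerts.mp hp.1).2.2.2.1
    rcases lt_trichotomy s r with hsr | rfl | hsr
    · exact Finset.mem_union_left _ (by
        unfold coverF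
        rw [Finset.mem_biUnion]
        exact ⟨s, Finset.mem_range.mpr hsr, Finset.mem_union.mpr hs⟩)
    · rcases hs with h' | h'
      · exact Finset.mem_union_right _ h'
      · exfalso
        rw [mem_starF] at h'
        have : p = (cX s, p.2) := Prod.ext h'.1 rfl
        exact hz p.2 (this ▸ hpI)
    · exfalso
      have hcs : TX (r + 1) ≤ TX s := TX_mono hsr
      have h3 := TX_lt_cX s
      rcases hs with h' | h'
      · rw [mem_fanF] at h'; omega
      · rw [mem_starF] at h'
        have := cX_lt_TX_succ s
        omega
  have h1 := Finset.card_le_card hsub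
  have h2 := (Finset.card_union_le (coverF r) (fanF r))
  have h3 := card_coverF r
  have h4 := card_fanF r
  omega

include hIG hind in
lemma key_round (r : ℕ) :
    ∃ n, r ≤ n ∧ 0 < countIn GG n ∧ (r + 1) * countIn I n ≤ countIn GG n := by
  classical
  by_cases hc : ∃ z, (cX r, z) ∈ I
  · obtain ⟨z, hz⟩ := hc
    refine ⟨cX r, ?_, ?_, ?_⟩
    · have := le_TX r; have := TX_lt_cX r; omega
    · have h2 := countIn_GG_ge_cX r
      have h3 : 1 * 1 ≤ (r + 1) * gX r := Nat.mul_le_mul (by omega) (gX_pos r)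
      omega
    · have h1 := countIn_I_fan hIG hind hz
      have h2 := countIn_GG_ge_cX r
      calc (r + 1) * countIn I (cX r) ≤ (r + 1) * gX r := by
            apply Nat.mul_le_mul_left; omega
        _ ≤ countIn GG (cX r) := h2
  · push_neg at hc
    refine ⟨TX (r + 1), ?_, ?_, ?_⟩
    · have := le_TX (r + 1); omega
    · have h2 := countIn_GG_ge_TX_succ r
      have h3 : 1 * 1 ≤ (r + 1) * (gX r + cX r) :=
        Nat.mul_le_mul (by omega) (by have := gX_pos r; omega)
      omega
    · have h1 := countIn_I_star hIG hind hc
      have h2 := countIn_GG_ge_TX_succ r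
      calc (r + 1) * countIn I (TX (r + 1)) ≤ (r + 1) * (gX r + cX r) :=
            Nat.mul_le_mul_left _ h1
        _ ≤ countIn GG (TX (r + 1)) := h2

end Indep

lemma countIn_mono_set {I J : Set (ℕ × ℕ)} (h : I ⊆ J) (n : ℕ) :
    countIn I n ≤ countIn J n := by
  classical
  rw [countIn, countIn]
  apply Finset.card_le_card
  intro p hp
  rw [Finset.mem_filter] at hp ⊢
  exact ⟨hp.1, h hp.2⟩

/-- There is `G ⊆ V(Sh_ℕ^2)` meeting `{(i,j) : 1 ≤ i < j ≤ n}` for all large `n`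
such that every independent set `I ⊆ G` of `Sh_ℕ^2` has lower density `0` in `G`. -/
theorem exists_hereditary_counterexample :
    ∃ G : Set (ℕ × ℕ), G ⊆ {p : ℕ × ℕ | 1 ≤ p.1 ∧ p.1 < p.2} ∧
      (∀ᶠ n in Filter.atTop, 0 < countIn G n) ∧
      ∀ I : Set (ℕ × ℕ), I ⊆ G → (∀ p ∈ I, ∀ q ∈ I, ¬ shAdj p q) →
        Filter.liminf (fun n : ℕ => (countIn I n : ℝ) / (countIn G n : ℝ))
          Filter.atTop = 0 := by
  classical
  refine ⟨GG, ?_, ?_, ?_⟩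
  · rintro p ⟨r, hp | hp⟩
    · rw [mem_fanF] at hp
      exact ⟨hp.1, by omega⟩
    · rw [mem_starF] at hp
      have hone : 1 ≤ cX r := by have := TX_lt_cX r; have := one_le_TX r; omega
      exact ⟨by omega, by omega⟩
  · rw [Filter.eventually_atTop]
    refine ⟨cX 0, fun n hn => ?_⟩
    rw [countIn]
    apply Finset.card_pos.mpr
    refine ⟨(1, cX 0), Finset.mem_filter.mpr ⟨mem_shiftVerts.mpr ?_, ⟨0, Or.inl (mem_fanF.mpr ?_)⟩⟩⟩
    · have h1 : 1 < cX 0 := by have := TX_lt_cX 0; have := one_le_TX 0; omega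
      exact ⟨le_refl 1, by omega, by omega, hn, h1⟩
    · have h1 : 1 < cX 0 := by have := TX_lt_cX 0; have := one_le_TX 0; omega
      exact ⟨le_refl 1, h1, rfl⟩
  · intro I hIG hind
    set f : ℕ → ℝ := fun n => (countIn I n : ℝ) / (countIn GG n : ℝ) with hf
    have hf0 : ∀ n, 0 ≤ f n := fun n => by positivity
    have hf1 : ∀ n, f n ≤ 1 := by
      intro n
      rcases Nat.eq_zero_or_pos (countIn GG n) with h | h
      · have : countIn I n = 0 := by
          have := countIn_mono_set hIG n; omega
        simp [hf, this]
      · rw [hf]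
        apply div_le_one_of_le₀
        · exact_mod_cast countIn_mono_set hIG n
        · positivity
    have hbdd : Filter.IsBoundedUnder (· ≥ ·) Filter.atTop f :=
      Filter.isBoundedUnder_of ⟨0, fun n => hf0 n⟩
    have hcob : Filter.IsCoboundedUnder (· ≥ ·) Filter.atTop f :=
      Filter.isCoboundedUnder_ge_of_le _ hf1
    apply le_antisymm
    · -- liminf ≤ 0
      have hle : ∀ ε : ℝ, 0 < ε → Filter.liminf f Filter.atTop ≤ ε := by
        intro ε hε
        apply Filter.liminf_le_of_frequently_le _ hbdd
        rw [Filter.frequently_atTop]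
        intro N
        obtain ⟨m, hm⟩ := exists_nat_gt (1 / ε)
        set r := max N m with hr
        obtain ⟨n, hn1, hn2, hn3⟩ := key_round hIG hind r
        refine ⟨n, le_trans (le_max_left N m) hn1, ?_⟩
        have hcG : (0 : ℝ) < (countIn GG n : ℝ) := by exact_mod_cast hn2
        have hcast : ((r : ℝ) + 1) * (countIn I n : ℝ) ≤ (countIn GG n : ℝ) := by
          exact_mod_cast hn3
        have : f n ≤ 1 / (r + 1 : ℝ) := by
          rw [hf, div_le_div_iff₀ hcG (by positivity)]
          nlinarith
        refine this.trans ?_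
        rw [div_le_iff₀ (by positivity)]
        have hm' : 1 / ε < (m : ℝ) := hm
        have hrm : (m : ℝ) ≤ (r : ℝ) + 1 := by
          have : m ≤ r := le_max_right N m
          exact_mod_cast Nat.le_succ_of_le this
        calc (1 : ℝ) = ε * (1 / ε) := by field_simp
          _ ≤ ε * (r + 1) := by
              apply mul_le_mul_of_nonneg_left _ (le_of_lt hε)
              exact le_trans (le_of_lt hm') hrm
      by_contra h
      push_neg at h
      have := hle (Filter.liminf f Filter.atTop / 2) (by linarith)
      linarith
    · exact Filter.le_liminf_of_le hcob (Filter.Eventually.of_forall hf0)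
end

section
/- For every integer n > 4 and every subset G of the vertex set of the shift graph Sh_n^4, the independence number of the induced subgraph satisfies α(Sh_n^4[G]) ≥ (3/8)·|G|. -/
/-- `y` is the "shift" of `x`: `x_i = y_{i+1}` for all `i ∈ {1,…,k-1}`. -/
def shiftRel (k : ℕ) (x y : Fin k → ℕ) : Prop :=
  ∀ i j : Fin k, (j : ℕ) = (i : ℕ) + 1 → x i = y j

/-- Adjacency in the shift graph `Sh_n^k`. -/
def shAdjK (k : ℕ) (x y : Fin k → ℕ) : Prop :=
  x ≠ y ∧ (shiftRel k x y ∨ shiftRel k y x)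

/-- `x` is a vertex of `Sh_n^k`: an increasing `k`-tuple with entries in `{1,…,n}`. -/
def isVertK (n k : ℕ) (x : Fin k → ℕ) : Prop :=
  StrictMono x ∧ ∀ i, 1 ≤ x i ∧ x i ≤ n

open Classical in
/-- The independence number of the subgraph of `Sh_n^k` induced on `G`. -/
noncomputable def indepNumK (k : ℕ) (G : Finset (Fin k → ℕ)) : ℕ :=
  (G.powerset.filter fun I => ∀ x ∈ I, ∀ y ∈ I, ¬ shAdjK k x y).sup Finset.card

/-- `α_n^k`: the minimum of `α(Sh_n^k[G])/|G|` over nonempty `G ⊆ V(Sh_n^k)`. -/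
noncomputable def alphaNK (n k : ℕ) : ℝ :=
  sInf {r : ℝ | ∃ G : Finset (Fin k → ℕ), G.Nonempty ∧ (∀ x ∈ G, isVertK n k x) ∧
    r = (indepNumK k G : ℝ) / G.card}

/-!
Colour the integers by a random set `S` and record, for each vertex `x`, the word
`(x₁ ∈ S, …, x₄ ∈ S) ∈ Bool⁴`. A shift edge `x → y` identifies the last three letters of `y`
with the first three of `x`, so reading each word `w` as the de Bruijn edge
`init w → tail w`, the vertices whose words lie in one directed cut `(Aᶜ, A)` of the de Bruijn
graph `B(2,3)` form an independent set. Since the entries of a vertex are distinct, its word is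
uniform in `Bool⁴`, and a maximum directed cut of `B(2,3)` has `6` of its `16` edges; hence some
`S` selects at least `3/8` of `G`.
-/

open Finset Function

section Pattern

variable {α : Type*} [DecidableEq α] {k : ℕ}

def pattern (S : Finset α) (x : Fin k → α) : Fin k → Bool := fun j => decide (x j ∈ S)

variable {U : Finset α} {x : Fin k → α}

lemma card_filter_pattern_eq_mul_two_pow (hx : Injective x) (hxU : ∀ j, x j ∈ U)
    (w : Fin k → Bool) : #{S ∈ U.powerset | pattern S x = w} * 2 ^ k = 2 ^ #U := by
  set V := univ.image x
  have hVU : V ⊆ U := by simpa [V, image_subset_iff] using hxU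
  have hVcard : #V = k := by simp [V, card_image_of_injective _ hx]
  have hfiber : #{S ∈ U.powerset | pattern S x = w} = #(U \ V).powerset := by
    have hxV : ∀ j, x j ∈ V := fun j => mem_image_of_mem x (mem_univ j)
    refine card_nbij' (fun S => S \ V) (fun T => T ∪ ({j | w j} : Finset (Fin k)).image x)
      ?_ ?_ ?_ ?_
    · intro S hS
      simp only [coe_filter, mem_powerset, Set.mem_ofPred_eq] at hS
      simp only [coe_powerset, Set.mem_preimage, Set.mem_powerset_iff, coe_subset]
      exact sdiff_subset_sdiff hS.1 le_rfl
    · intro T hT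
      simp only [coe_powerset, Set.mem_preimage, Set.mem_powerset_iff, coe_subset,
        subset_sdiff] at hT
      simp only [coe_filter, mem_powerset, Set.mem_ofPred_eq]
      refine ⟨union_subset hT.1 (image_subset_iff.2 fun j _ => hxU j), funext fun j => ?_⟩
      have : x j ∉ T := fun h => disjoint_left.1 hT.2 h (hxV j)
      simp [pattern, this, hx.eq_iff]
    · intro S hS
      simp only [coe_filter, mem_powerset, Set.mem_ofPred_eq] at hS
      ext m
      by_cases hm : m ∈ V
      · obtain ⟨j, -, rfl⟩ := mem_image.1 hm
        simp [← hS.2, pattern, hx.eq_iff, hm]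
      · simp only [mem_union, mem_sdiff, hm, not_false_eq_true, and_true, or_iff_left_iff_imp]
        exact fun h => absurd (image_subset_image (subset_univ _) h) hm
    · intro T hT
      simp only [coe_powerset, Set.mem_preimage, Set.mem_powerset_iff, coe_subset,
        subset_sdiff] at hT
      dsimp only
      rw [union_sdiff_distrib, hT.2.sdiff_eq_left,
        sdiff_eq_empty_iff_subset.2 (image_subset_image (subset_univ _)), union_empty]
  rw [hfiber, card_powerset, card_sdiff_of_subset hVU, hVcard, ← pow_add,
    Nat.sub_add_cancel (hVcard ▸ card_le_card hVU)]

lemma card_filter_pattern_mem_mul_two_pow (hx : Injective x) (hxU : ∀ j, x j ∈ U)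
    (P : Finset (Fin k → Bool)) :
    #{S ∈ U.powerset | pattern S x ∈ P} * 2 ^ k = #P * 2 ^ #U := by
  rw [card_eq_sum_card_fiberwise (s := {S ∈ U.powerset | pattern S x ∈ P}) (t := P)
      fun S hS => (mem_filter.1 hS).2,
    sum_mul, card_eq_sum_ones P, sum_mul]
  refine sum_congr rfl fun w hw => ?_
  rw [filter_filter, one_mul, ← card_filter_pattern_eq_mul_two_pow hx hxU w, filter_congr fun S _ => and_iff_right_of_imp fun h : pattern S x = w => h ▸ hw]

lemma exists_card_mul_le_card_filter_pattern_mem {G : Finset (Fin k → α)}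
    (hG : ∀ x ∈ G, Injective x ∧ ∀ j, x j ∈ U) (P : Finset (Fin k → Bool)) :
    ∃ S ⊆ U, #G * #P ≤ #{x ∈ G | pattern S x ∈ P} * 2 ^ k := by
  have hsum : ∑ S ∈ U.powerset, #{x ∈ G | pattern S x ∈ P} * 2 ^ k =
      ∑ S ∈ U.powerset, #G * #P :=
    calc ∑ S ∈ U.powerset, #{x ∈ G | pattern S x ∈ P} * 2 ^ k
        = ∑ x ∈ G, #{S ∈ U.powerset | pattern S x ∈ P} * 2 ^ k := by
          simp only [card_filter, sum_mul]
          exact sum_comm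
      _ = ∑ x ∈ G, #P * 2 ^ #U :=
          sum_congr rfl fun x hx => card_filter_pattern_mem_mul_two_pow (hG x hx).1 (hG x hx).2 P
      _ = ∑ S ∈ U.powerset, #G * #P := by
          simp only [sum_const, card_powerset, smul_eq_mul]
          ring
  obtain ⟨S, hS, hle⟩ := exists_le_of_sum_le (powerset_nonempty U) hsum.ge
  exact ⟨S, mem_powerset.1 hS, hle⟩

end Pattern

section ShiftGraph

variable {k : ℕ}

lemma init_pattern_eq_tail_pattern {x y : Fin (k + 1) → ℕ} (h : shiftRel (k + 1) x y)
    (S : Finset ℕ) : Fin.init (pattern S x) = Fin.tail (pattern S y) := by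
  funext i
  simp [Fin.init, Fin.tail, pattern, h i.castSucc i.succ (by simp)]

def deBruijnCut (A : Finset (Fin k → Bool)) : Finset (Fin (k + 1) → Bool) :=
  {w | Fin.tail w ∈ A ∧ Fin.init w ∉ A}

lemma not_shAdjK_of_pattern_mem_deBruijnCut {A : Finset (Fin k → Bool)} {S : Finset ℕ}
    {x y : Fin (k + 1) → ℕ} (hx : pattern S x ∈ deBruijnCut A)
    (hy : pattern S y ∈ deBruijnCut A) : ¬ shAdjK (k + 1) x y := by
  simp only [deBruijnCut, mem_filter, mem_univ, true_and] at hx hy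
  rintro ⟨-, h | h⟩
  · exact hx.2 (init_pattern_eq_tail_pattern h S ▸ hy.1)
  · exact hy.2 (init_pattern_eq_tail_pattern h S ▸ hx.1)

lemma card_le_indepNumK {G I : Finset (Fin k → ℕ)} (hIG : I ⊆ G)
    (hI : ∀ x ∈ I, ∀ y ∈ I, ¬ shAdjK k x y) : #I ≤ indepNumK k G := by
  refine le_sup (f := card) ?_
  simp only [mem_filter, mem_powerset]
  exact ⟨hIG, hI⟩

end ShiftGraph

def maxDicutSide : Finset (Fin 3 → Bool) :=
  {![false, false, false], ![false, true, false], ![false, true, true], ![true, true, false]}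

lemma card_deBruijnCut_maxDicutSide : #(deBruijnCut maxDicutSide) = 6 := by
  decide

theorem indepNum4_ge_general (n : ℕ) (G : Finset (Fin 4 → ℕ))
    (hG : ∀ x ∈ G, isVertK n 4 x) :
    (3/8 : ℝ) * G.card ≤ (indepNumK 4 G : ℝ) := by
  have hGU : ∀ x ∈ G, Injective x ∧ ∀ j, x j ∈ range (n + 1) := fun x hx =>
    ⟨(hG x hx).1.injective, fun j => mem_range_succ_iff.2 ((hG x hx).2 j).2⟩
  obtain ⟨S, -, hS⟩ := exists_card_mul_le_card_filter_pattern_mem hGU (deBruijnCut maxDicutSide)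
  rw [card_deBruijnCut_maxDicutSide] at hS
  have hI : #G * 6 ≤ indepNumK 4 G * 2 ^ 4 := by
    refine hS.trans (Nat.mul_le_mul_right _ (card_le_indepNumK (filter_subset _ G) ?_))
    intro x hx y hy
    exact not_shAdjK_of_pattern_mem_deBruijnCut (mem_filter.1 hx).2 (mem_filter.1 hy).2
  have hIR : (#G : ℝ) * 6 ≤ indepNumK 4 G * 2 ^ 4 := by exact_mod_cast hI
  linarith

/-- For `n > 4`, every `G ⊆ V(Sh_n^4)` satisfies `α(Sh_n^4[G]) ≥ (3/8)·|G|`. -/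
theorem indepNum4_ge (n : ℕ) (hn : 4 < n) (G : Finset (Fin 4 → ℕ))
    (hG : ∀ x ∈ G, isVertK n 4 x) :
    (3/8 : ℝ) * G.card ≤ (indepNumK 4 G : ℝ) :=
  indepNum4_ge_general n G hG
end
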